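/- Let q be a nonzero noncommutative polynomial in ℂ⟨X₁, …, Xₙ⟩ with zero coefficient at the empty word, let m_q be the number of words with nonzero coefficient in q, and let d be the degree of q (the maximal length of such a word). Then there exist a natural number N with 2 ≤ N ≤ 2·m_q·d + 2·m_q and a monoid homomorphism μ : F(X) → M_N(ℂ[z]) such that for every nonempty word F, μ(F)_{1,N} = Σ_{k=1}^{|F|} ⟨q^k⟩_F · z^k, where ⟨q^k⟩_F denotes the coefficient of the word F in the k-th power q^k. -/

import Mathlib

/-!
With `Q = z q`, the claimed entry is the coefficient of `F` in `Q* = ∑_{k ≥ 0} Q ^ k`: the term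
`k = 0` does not contribute to a nonempty `F`, and the terms `k > |F|` vanish because `q` has no
constant term. `Q*` is recognized by an automaton whose states are the suffixes of the words of `q`
(at most `m_q (d + 1)` of them) together with one initial state, and the correctness of the
automaton is an induction on `F` driven by `Q* = 1 + Q Q*`.
-/

open Finset

namespace FreeMonoid

variable {α : Type*}

instance [DecidableEq α] : DecidableEq (FreeMonoid α) := inferInstanceAs (DecidableEq (List α))

def factorizations (F : FreeMonoid α) : Finset (FreeMonoid α × FreeMonoid α) :=
  univ.map ⟨fun i : Fin (F.length + 1) => (ofList (F.toList.take i), ofList (F.toList.drop i)),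
    fun i j h => Fin.ext <| by
      have hlen := congrArg (fun p => p.1.length) h
      have := i.is_le
      have := j.is_le
      simp only [length, toList_ofList, List.length_take] at *
      omega⟩

theorem mem_factorizations {F : FreeMonoid α} {p : FreeMonoid α × FreeMonoid α} :
    p ∈ factorizations F ↔ p.1 * p.2 = F := by
  constructor
  · intro hp
    obtain ⟨i, -, rfl⟩ := Finset.mem_map.mp hp
    exact List.take_append_drop _ _
  · rintro rfl
    refine Finset.mem_map.mpr ⟨⟨p.1.length, by simp [length_mul]⟩, mem_univ _, ?_⟩
    change (ofList ((p.1 * p.2).toList.take p.1.length),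
      ofList ((p.1 * p.2).toList.drop p.1.length)) = p
    rw [toList_mul, length, List.take_left, List.drop_left]
    rfl

theorem card_factorizations (F : FreeMonoid α) : F.factorizations.card = F.length + 1 := by
  simp [factorizations]

theorem sum_factorizations_one {M : Type*} [AddCommMonoid M]
    (f : FreeMonoid α × FreeMonoid α → M) :
    ∑ p ∈ factorizations 1, f p = f (1, 1) := by
  simp only [factorizations, sum_map]
  exact Fin.sum_univ_one _

theorem sum_factorizations_of_mul {M : Type*} [AddCommMonoid M]
    (f : FreeMonoid α × FreeMonoid α → M) (x : α) (F : FreeMonoid α) :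
    ∑ p ∈ factorizations (of x * F), f p =
      f (1, of x * F) + ∑ p ∈ factorizations F, f (of x * p.1, p.2) := by
  simp only [factorizations, sum_map]
  exact Fin.sum_univ_succ _

variable [DecidableEq α]

def suffixes (W : FreeMonoid α) : Finset (FreeMonoid α) := W.factorizations.image Prod.snd

theorem mem_suffixes {W u : FreeMonoid α} : u ∈ W.suffixes ↔ ∃ r, r * u = W := by
  simp [suffixes, mem_factorizations]

theorem card_biUnion_suffixes_le (S : Finset (FreeMonoid α)) :
    (S.biUnion suffixes).card ≤ S.card * (S.sup length + 1) :=
  calc (S.biUnion suffixes).card ≤ ∑ W ∈ S, W.suffixes.card := card_biUnion_le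
    _ ≤ ∑ _W ∈ S, (S.sup length + 1) := sum_le_sum fun W hW =>
      (card_image_le.trans_eq (card_factorizations W)).trans (by simpa using le_sup hW)
    _ = S.card * (S.sup length + 1) := by rw [sum_const, smul_eq_mul]

theorem mem_biUnion_suffixes_of_mul_mem {S : Finset (FreeMonoid α)} {r u : FreeMonoid α}
    (h : r * u ∈ S) : u ∈ S.biUnion suffixes :=
  mem_biUnion.mpr ⟨_, h, mem_suffixes.mpr ⟨r, rfl⟩⟩

theorem mem_biUnion_suffixes_of_mul_mem_biUnion_suffixes {S : Finset (FreeMonoid α)}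
    {r u : FreeMonoid α} (h : r * u ∈ S.biUnion suffixes) : u ∈ S.biUnion suffixes := by
  obtain ⟨W, hW, hruW⟩ := mem_biUnion.mp h
  obtain ⟨r', rfl⟩ := mem_suffixes.mp hruW
  exact mem_biUnion_suffixes_of_mul_mem ((mul_assoc r' r u).symm ▸ hW)

end FreeMonoid

namespace MonoidAlgebra

open FreeMonoid

variable {A α : Type*} [Semiring A]

theorem coeff_mul_eq_sum_factorizations (f g : MonoidAlgebra A (FreeMonoid α))
    (F : FreeMonoid α) :
    (f * g).coeff F = ∑ p ∈ F.factorizations, f.coeff p.1 * g.coeff p.2 :=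
  coeff_mul_antidiag f g F _ mem_factorizations

theorem coeff_one_of_ne_one {F : FreeMonoid α} (hF : F ≠ 1) :
    (1 : MonoidAlgebra A (FreeMonoid α)).coeff F = 0 := by
  simp [one_def, hF.symm]

variable {Q : MonoidAlgebra A (FreeMonoid α)}

theorem coeff_pow_eq_zero_of_length_lt (hQ : Q.coeff 1 = 0) {k : ℕ} {F : FreeMonoid α}
    (hF : F.length < k) : (Q ^ k).coeff F = 0 := by
  induction k generalizing F with
  | zero => exact absurd hF (Nat.not_lt_zero _)
  | succ k ih =>
    rw [pow_succ', coeff_mul_eq_sum_factorizations]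
    refine sum_eq_zero fun p hp => ?_
    by_cases hp1 : p.1 = 1
    · rw [hp1, hQ, zero_mul]
    · have hlen := congrArg length (mem_factorizations.mp hp)
      have := length_eq_zero.not.mpr hp1
      rw [length_mul] at hlen
      rw [ih (by omega), mul_zero]

/-- The coefficient of `F` in `Q* = ∑_{k ≥ 0} Q ^ k`. The sum is truncated at `k = |F|`, which
loses nothing when `Q` has no constant term (`coeff_pow_eq_zero_of_length_lt`). -/
noncomputable def starCoeff (Q : MonoidAlgebra A (FreeMonoid α)) (F : FreeMonoid α) : A :=
  ∑ k ∈ range (F.length + 1), (Q ^ k).coeff F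

theorem starCoeff_one : starCoeff Q 1 = 1 := by
  simp [starCoeff, length_one]

theorem starCoeff_eq_sum_Icc {F : FreeMonoid α} (hF : F ≠ 1) :
    starCoeff Q F = ∑ k ∈ Icc 1 F.length, (Q ^ k).coeff F := by
  rw [starCoeff, sum_range_succ', pow_zero, coeff_one_of_ne_one hF, add_zero,
    ← Ico_add_one_right_eq_Icc, sum_Ico_eq_sum_range]
  simp [add_comm]

theorem coeff_sum_range_pow (hQ : Q.coeff 1 = 0) {F : FreeMonoid α} {N : ℕ} (hN : F.length ≤ N) :
    (∑ k ∈ range (N + 1), Q ^ k).coeff F = starCoeff Q F := by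
  rw [coeff_sum, Finsupp.finsetSum_apply, starCoeff]
  refine (sum_subset (range_subset_range.mpr (by omega)) fun k hk hkF => ?_).symm
  exact coeff_pow_eq_zero_of_length_lt hQ (by simpa using hkF)

theorem starCoeff_of_mul (hQ : Q.coeff 1 = 0) (x : α) (F : FreeMonoid α) :
    starCoeff Q (FreeMonoid.of x * F) =
      ∑ p ∈ F.factorizations, Q.coeff (FreeMonoid.of x * p.1) * starCoeff Q p.2 := by
  have hQstar :
      ∑ k ∈ range (F.length + 2), Q ^ k = 1 + Q * ∑ k ∈ range (F.length + 1), Q ^ k := by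
    rw [sum_range_succ', mul_sum, add_comm]
    simp only [pow_succ', pow_zero]
  rw [← coeff_sum_range_pow hQ (by rw [length_mul, length_of, add_comm]), hQstar, coeff_add,
    Finsupp.add_apply, coeff_one_of_ne_one (by simp), zero_add, coeff_mul_eq_sum_factorizations,
    sum_factorizations_of_mul, hQ, zero_mul, zero_add]
  refine sum_congr rfl fun p hp => ?_
  have hlen := congrArg length (mem_factorizations.mp hp)
  rw [length_mul] at hlen
  dsimp only
  rw [coeff_sum_range_pow hQ (by omega)]

open Polynomial in
theorem coeff_pow_X_smul_mapRingHom_C {R M : Type*} [CommSemiring R] [Monoid M]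
    (q : MonoidAlgebra R M) (k : ℕ) (F : M) :
    (((X : R[X]) • mapRingHom M C q) ^ k).coeff F = C ((q ^ k).coeff F) * X ^ k := by
  rw [_root_.smul_pow, ← map_pow, coeff_smul_apply, coeff_mapRingHom, smul_eq_mul, mul_comm]

end MonoidAlgebra

theorem Finset.sum_coe_mul_sum_ite_eq {ι κ M : Type*} [DecidableEq ι]
    [NonUnitalNonAssocSemiring M]
    {P : Finset ι} {w : ι → M} (hw : ∀ i ∉ P, w i = 0) (S : Finset κ) (f : κ → ι) (g : κ → M) :
    ∑ v : P, w v * ∑ p ∈ S, (if f p = v then g p else 0) = ∑ p ∈ S, w (f p) * g p := by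
  simp_rw [mul_sum, mul_ite, mul_zero]
  rw [sum_comm]
  refine sum_congr rfl fun p _ => ?_
  rw [sum_coe_sort P (fun v => if f p = v then w v * g p else 0), sum_ite_eq]
  split_ifs with h
  · rfl
  · rw [hw _ h, zero_mul]

theorem Equiv.exists_apply_eq_and_apply_eq {σ τ : Type*} [DecidableEq τ] (e : σ ≃ τ) {a b : σ}
    (hab : a ≠ b) {i j : τ} (hij : i ≠ j) : ∃ e' : σ ≃ τ, e' a = i ∧ e' b = j := by
  set e₁ := e.trans (Equiv.swap (e a) i)
  have he₁ : e₁ a = i := by simp [e₁]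
  refine ⟨e₁.trans (Equiv.swap (e₁ b) j), ?_, by simp⟩
  rw [Equiv.trans_apply, he₁, Equiv.swap_apply_of_ne_of_ne (he₁ ▸ e₁.injective.ne hab) hij]

section Automaton

open FreeMonoid

variable {A α : Type*} [Semiring A] [DecidableEq α]
  {Q : MonoidAlgebra A (FreeMonoid α)} {P : Finset (FreeMonoid α)}

/-- A state `some u` remembers the suffix `u` of a word of `Q` that still has to be read; `some 1`
is the accepting state, from which a new word of `Q` is started, and `none` is an initial state that
behaves like `some 1` but is not accepting. -/
def transitionMatrix (Q : MonoidAlgebra A (FreeMonoid α)) (P : Finset (FreeMonoid α)) (x : α) :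
    Matrix (Option P) (Option P) A
  | _, none => 0
  | none, some v => Q.coeff (of x * v)
  | some u, some v =>
    (if (u : FreeMonoid α) = 1 then Q.coeff (of x * v) else 0) +
      if (u : FreeMonoid α) = of x * v then 1 else 0

theorem transitionMatrix_none (h1 : 1 ∈ P) (x : α) :
    transitionMatrix Q P x none = transitionMatrix Q P x (some ⟨1, h1⟩) := by
  funext j
  cases j <;> simp [transitionMatrix, eq_comm (a := (1 : FreeMonoid α))]

theorem lift_transitionMatrix_apply_some_one (hQ : Q.coeff 1 = 0) (h1 : 1 ∈ P)
    (hsupp : ∀ x v, Q.coeff (of x * v) ≠ 0 → v ∈ P) (hsuffix : ∀ x v, of x * v ∈ P → v ∈ P)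
    (F : FreeMonoid α) (u : P) :
    lift (transitionMatrix Q P) F (some u) (some ⟨1, h1⟩) =
      ∑ p ∈ F.factorizations, if p.1 = u then Q.starCoeff p.2 else 0 := by
  induction F using FreeMonoid.inductionOn' generalizing u with
  | one =>
    rw [map_one, sum_factorizations_one, MonoidAlgebra.starCoeff_one]
    by_cases hu : (u : FreeMonoid α) = 1 <;> simp [Matrix.one_apply, Subtype.ext_iff, hu, eq_comm]
  | of_mul x F ih =>
    have hw : ∀ v ∉ P, ((if (u : FreeMonoid α) = 1 then Q.coeff (of x * v) else 0) +
        if (u : FreeMonoid α) = of x * v then 1 else 0) = 0 := by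
      intro v hv
      have hQv : Q.coeff (of x * v) = 0 := not_not.mp (mt (hsupp x v) hv)
      have huv : (u : FreeMonoid α) ≠ of x * v := fun h => hv (hsuffix x v (h ▸ u.2))
      simp [hQv, huv]
    rw [map_mul, lift_eval_of, Matrix.mul_apply, Fintype.sum_option]
    simp only [transitionMatrix, zero_mul, zero_add, ih]
    rw [Finset.sum_coe_mul_sum_ite_eq hw, sum_factorizations_of_mul,
      MonoidAlgebra.starCoeff_of_mul hQ]
    simp only [add_mul, ite_mul, zero_mul, one_mul, sum_add_distrib,
      eq_comm (b := (u : FreeMonoid α))]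
    by_cases hu : (u : FreeMonoid α) = 1 <;> simp [hu]

theorem lift_transitionMatrix_apply_none (hQ : Q.coeff 1 = 0) (h1 : 1 ∈ P)
    (hsupp : ∀ x v, Q.coeff (of x * v) ≠ 0 → v ∈ P) (hsuffix : ∀ x v, of x * v ∈ P → v ∈ P)
    {F : FreeMonoid α} (hF : F ≠ 1) :
    lift (transitionMatrix Q P) F none (some ⟨1, h1⟩) = Q.starCoeff F := by
  induction F using FreeMonoid.inductionOn' with
  | one => exact absurd rfl hF
  | of_mul x F _ =>
    have hfree := lift_transitionMatrix_apply_some_one hQ h1 hsupp hsuffix (of x * F) ⟨1, h1⟩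
    rw [map_mul, lift_eval_of, Matrix.mul_apply] at hfree ⊢
    rw [transitionMatrix_none h1, hfree, sum_factorizations_of_mul]
    simp

theorem exists_monoidHom_apply_zero_last_eq_starCoeff (hQ : Q.coeff 1 = 0) (h1 : 1 ∈ P)
    (hsupp : ∀ x v, Q.coeff (of x * v) ≠ 0 → v ∈ P) (hsuffix : ∀ x v, of x * v ∈ P → v ∈ P) :
    ∃ μ : FreeMonoid α →* Matrix (Fin (P.card + 1)) (Fin (P.card + 1)) A,
      ∀ F, F ≠ 1 → μ F 0 (Fin.last _) = Q.starCoeff F := by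
  have hcard : Fintype.card (Option P) = P.card + 1 := by simp
  have hlast : (0 : Fin (P.card + 1)) ≠ Fin.last _ := by
    simp [Fin.ext_iff, (card_pos.mpr ⟨1, h1⟩).ne]
  obtain ⟨e, he0, helast⟩ := (Fintype.equivFinOfCardEq hcard).exists_apply_eq_and_apply_eq
    (Option.some_ne_none ⟨1, h1⟩).symm hlast
  refine ⟨(Matrix.reindexRingEquiv A e).toMonoidHom.comp (lift (transitionMatrix Q P)),
    fun F hF => ?_⟩
  rw [← he0, ← helast]
  simp only [MonoidHom.comp_apply, RingHom.toMonoidHom_eq_coe, RingEquiv.toRingHom_eq_coe,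
    MonoidHom.coe_coe, RingHom.coe_coe, Matrix.coe_reindexRingEquiv, Matrix.reindex_apply,
    Matrix.submatrix_apply, Equiv.symm_apply_apply]
  exact lift_transitionMatrix_apply_none hQ h1 hsupp hsuffix hF

end Automaton

open FreeMonoid Polynomial

/-- For a nonzero noncommutative polynomial `q ∈ ℂ⟨X₁,…,Xₙ⟩` with zero constant
coefficient, with `m_q` words with nonzero coefficient and degree `d`, there is a monoid
homomorphism `μ : F(X) → M_N(ℂ[z])` of some size `2 ≤ N ≤ 2·m_q·d + 2·m_q` recognizing
the pseudo-inverse series `(zq)* = Σ_{k ≥ 1} (zq)^k`, i.e. for every nonempty word `F`,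
`μ(F)_{1,N} = Σ_{k=1}^{|F|} ⟨q^k⟩_F · z^k`. -/
theorem star_zq_recognized_small {n : ℕ}
    (q : MonoidAlgebra ℂ (FreeMonoid (Fin n)))
    (hq : q ≠ 0) (hqe : q.coeff (1 : FreeMonoid (Fin n)) = 0) :
    ∃ (N : ℕ) (hN : 2 ≤ N),
      N ≤ 2 * q.coeff.support.card * (q.coeff.support.sup fun W => (FreeMonoid.toList W).length)
            + 2 * q.coeff.support.card ∧
      ∃ μ : FreeMonoid (Fin n) →* Matrix (Fin N) (Fin N) (Polynomial ℂ),
        ∀ F : FreeMonoid (Fin n), F ≠ 1 →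
          μ F ⟨0, by omega⟩ ⟨N - 1, by omega⟩ =
            ∑ k ∈ Finset.Icc 1 (FreeMonoid.toList F).length,
              Polynomial.C ((q ^ k).coeff F) * Polynomial.X ^ k := by
  set P := q.coeff.support.biUnion suffixes
  set Q := (X : ℂ[X]) • MonoidAlgebra.mapRingHom _ C q
  have hQ (F) : Q.coeff F = C (q.coeff F) * X := by
    rw [← pow_one Q, MonoidAlgebra.coeff_pow_X_smul_mapRingHom_C, pow_one, pow_one]
  obtain ⟨W, hW⟩ := Finsupp.support_nonempty_iff.mpr (mt MonoidAlgebra.coeff_eq_zero.mp hq)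
  have h1 : 1 ∈ P := mem_biUnion_suffixes_of_mul_mem ((mul_one W).symm ▸ hW)
  have hsupp (x v) (hxv : Q.coeff (of x * v) ≠ 0) : v ∈ P :=
    mem_biUnion_suffixes_of_mul_mem <| Finsupp.mem_support_iff.mpr fun h => hxv <| by
      rw [hQ, h, map_zero, zero_mul]
  obtain ⟨μ, hμ⟩ := exists_monoidHom_apply_zero_last_eq_starCoeff
    (by rw [hQ, hqe, map_zero, zero_mul]) h1 hsupp
    fun _ _ => mem_biUnion_suffixes_of_mul_mem_biUnion_suffixes
  have hm : 1 ≤ q.coeff.support.card := card_pos.mpr ⟨W, hW⟩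
  have hP : P.card ≤ q.coeff.support.card *
      ((q.coeff.support.sup fun W => (FreeMonoid.toList W).length) + 1) :=
    card_biUnion_suffixes_le _
  refine ⟨P.card + 1, by simpa using card_pos.mpr ⟨1, h1⟩, by nlinarith, μ, fun F hF => ?_⟩
  refine (hμ F hF).trans ?_
  rw [MonoidAlgebra.starCoeff_eq_sum_Icc hF]
  exact sum_congr rfl fun k _ => MonoidAlgebra.coeff_pow_X_smul_mapRingHom_C q k F
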